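/- arXiv:2402.15621 — 6 statements merged into one kernel-verified Lean document; each statement's English description precedes it below -/
import Mathlib

section
/- Let T be a tree, e = {u, u'} an edge of T, and let A be the component of T - e containing u and B the component containing u'. If w is a vertex in A and I is a finite multiset of vertices all lying in A, then d_T({u, w} ∪ I) + 1 = d_T({u', w} ∪ I). -/
/-!
Write `S = {w} ∪ I`; all of `S` lies on the `u`-side of the bridge `uu'`. Adding the edge `uu'`
to an optimal connected subgraph for `{u} ∪ S` gives one containing `{u'} ∪ S` with one more
edge. Conversely, a connected subgraph containing `u'` and `S` must use the bridge; deleting it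
and keeping only the component of `u` leaves a connected subgraph containing `{u} ∪ S` with at
least one edge fewer.
-/

open SimpleGraph

/-- The Steiner distance of a set `S` of vertices of `G`: the minimum number of edges
of a connected subgraph of `G` containing `S`. -/
noncomputable def steinerDist {V : Type*} (G : SimpleGraph V) (S : Set V) : ℕ :=
  sInf {m | ∃ H : G.Subgraph, H.Connected ∧ S ⊆ H.verts ∧ H.edgeSet.ncard = m}

namespace SimpleGraph

variable {V : Type*} {G : SimpleGraph V}

theorem Walk.reachable_deleteEdges_trichotomy (u u' : V) {x y : V} (p : G.Walk x y) :
    (G.deleteEdges {s(u, u')}).Reachable x y ∨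
    ((G.deleteEdges {s(u, u')}).Reachable x u ∧ (G.deleteEdges {s(u, u')}).Reachable u' y) ∨
    ((G.deleteEdges {s(u, u')}).Reachable x u' ∧ (G.deleteEdges {s(u, u')}).Reachable u y) := by
  induction p with
  | nil => exact Or.inl .rfl
  | @cons a b c hab q ih =>
    by_cases he : s(a, b) = s(u, u')
    · rcases Sym2.eq_iff.mp he with ⟨rfl, rfl⟩ | ⟨rfl, rfl⟩ <;>
        rcases ih with h | ⟨-, h⟩ | ⟨-, h⟩ <;> simp_all
    · have hab' : (G.deleteEdges {s(u, u')}).Reachable a b :=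
        Adj.reachable (by simp [hab, he] : (G.deleteEdges {s(u, u')}).Adj a b)
      rcases ih with h | ⟨h, h'⟩ | ⟨h, h'⟩
      · exact Or.inl (hab'.trans h)
      · exact Or.inr (Or.inl ⟨hab'.trans h, h'⟩)
      · exact Or.inr (Or.inr ⟨hab'.trans h, h'⟩)

theorem Reachable.deleteEdges_of_isBridge {K : SimpleGraph V} (hK : K ≤ G) {u u' x : V}
    (hbr : G.IsBridge s(u, u')) (h : K.Reachable u' x)
    (hx : (G.deleteEdges {s(u, u')}).Reachable u x) :
    (K.deleteEdges {s(u, u')}).Reachable u x := by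
  have hmono := deleteEdges_mono (s := {s(u, u')}) hK
  rcases h.some.reachable_deleteEdges_trichotomy u u' with h | ⟨h, -⟩ | ⟨-, h⟩
  · exact absurd (hx.trans (h.mono hmono).symm) hbr
  · exact absurd (h.mono hmono).symm hbr
  · exact h

theorem Subgraph.connected_induce_reachable (H : G.Subgraph) (v : V) :
    (H.induce {x | H.spanningCoe.Reachable v x}).Connected := by
  set C := {x | H.spanningCoe.Reachable v x}
  have hwalk : ∀ {a b : V} (p : H.spanningCoe.Walk a b) (ha : a ∈ C),
      (H.induce C).coe.Reachable ⟨a, ha⟩ ⟨b, ha.trans ⟨p⟩⟩ := by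
    intro a b p
    induction p with
    | nil => exact fun _ => .rfl
    | @cons a c b hac q ih =>
      intro ha
      have hc : c ∈ C := ha.trans hac.reachable
      have hadj : (H.induce C).coe.Adj ⟨a, ha⟩ ⟨c, hc⟩ := ⟨ha, hc, hac⟩
      exact hadj.reachable.trans (ih hc)
  rw [Subgraph.connected_iff', connected_iff_exists_forall_reachable]
  exact ⟨⟨v, .rfl⟩, fun ⟨x, hx⟩ => hwalk hx.some .rfl⟩

theorem Subgraph.Connected.spanningCoe_reachable {H : G.Subgraph} (hH : H.Connected) {x y : V}
    (hx : x ∈ H.verts) (hy : y ∈ H.verts) : H.spanningCoe.Reachable x y :=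
  (hH.preconnected ⟨x, hx⟩ ⟨y, hy⟩).map ⟨Subtype.val, id⟩

theorem Subgraph.exists_connected_ncard_edgeSet_add_one_le [Finite V] {u u' : V}
    (hbr : G.IsBridge s(u, u')) {H : G.Subgraph} (hH : H.Connected) (hu' : u' ∈ H.verts)
    {S : Set V} (hSH : S ⊆ H.verts) (hSne : S.Nonempty)
    (hS : ∀ x ∈ S, (G.deleteEdges {s(u, u')}).Reachable u x) :
    ∃ H₂ : G.Subgraph, H₂.Connected ∧ insert u S ⊆ H₂.verts ∧
      H₂.edgeSet.ncard + 1 ≤ H.edgeSet.ncard := by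
  set H' := H.deleteEdges {s(u, u')}
  have hreach (x) (hx : x ∈ S) : H.spanningCoe.Reachable u' x :=
    hH.spanningCoe_reachable hu' (hSH hx)
  have he : s(u, u') ∈ H.edgeSet := by
    by_contra he
    obtain ⟨x, hx⟩ := hSne
    have hle : H.spanningCoe ≤ G.deleteEdges {s(u, u')} := fun a b hab =>
      SimpleGraph.deleteEdges_adj.mpr ⟨H.adj_sub hab, fun hab' =>
        he (Set.mem_singleton_iff.mp hab' ▸ (hab : s(a, b) ∈ H.edgeSet))⟩
    exact hbr ((hS x hx).trans ((hreach x hx).mono hle).symm)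
  refine ⟨H'.induce {x | H'.spanningCoe.Reachable u x}, connected_induce_reachable _ _, ?_, ?_⟩
  · rintro x (rfl | hx)
    · exact .rfl
    · rw [← deleteEdges_spanningCoe_eq]
      exact (hreach x hx).deleteEdges_of_isBridge H.spanningCoe_le hbr (hS x hx)
  · have hsub :
        (H'.induce {x | H'.spanningCoe.Reachable u x}).edgeSet ⊆ H.edgeSet \ {s(u, u')} := by
      intro e he
      induction e using Sym2.ind with
      | _ a b => exact he.2.2
    calc _ ≤ (H.edgeSet \ {s(u, u')}).ncard + 1 :=
          Nat.add_le_add_right (Set.ncard_le_ncard hsub (Set.toFinite _)) 1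
      _ = H.edgeSet.ncard := Set.ncard_sdiff_singleton_add_one he (Set.toFinite _)

theorem steinerDist_le {S : Set V} {H : G.Subgraph} (hH : H.Connected) (hS : S ⊆ H.verts) :
    steinerDist G S ≤ H.edgeSet.ncard :=
  Nat.sInf_le ⟨H, hH, hS, rfl⟩

theorem Connected.exists_steinerDist_eq (hG : G.Connected) (S : Set V) :
    ∃ H : G.Subgraph, H.Connected ∧ S ⊆ H.verts ∧ H.edgeSet.ncard = steinerDist G S := by
  have htop : (⊤ : G.Subgraph).Connected :=
    Subgraph.connected_iff'.mpr (Subgraph.topIso.connected_iff.mpr hG)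
  exact Nat.sInf_mem
    (s := {m | ∃ H : G.Subgraph, H.Connected ∧ S ⊆ H.verts ∧ H.edgeSet.ncard = m})
    ⟨_, ⊤, htop, S.subset_univ, rfl⟩

theorem Connected.steinerDist_insert_le_add_one (hG : G.Connected) {u u' : V}
    (hadj : G.Adj u u') (S : Set V) :
    steinerDist G (insert u' S) ≤ steinerDist G (insert u S) + 1 := by
  obtain ⟨H, hH, hSH, hcard⟩ := hG.exists_steinerDist_eq (insert u S)
  have hconn : (H ⊔ G.subgraphOfAdj hadj).Connected :=
    Subgraph.connected_sup hH.preconnected (Subgraph.subgraphOfAdj_connected hadj).preconnected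
      ⟨u, hSH (Set.mem_insert u S), by simp⟩
  have hsub : insert u' S ⊆ (H ⊔ G.subgraphOfAdj hadj).verts := by
    rintro x (rfl | hx)
    · exact Or.inr (by simp)
    · exact Or.inl (hSH (Set.mem_insert_of_mem u hx))
  calc steinerDist G (insert u' S) ≤ (H ⊔ G.subgraphOfAdj hadj).edgeSet.ncard :=
        steinerDist_le hconn hsub
    _ ≤ H.edgeSet.ncard + (G.subgraphOfAdj hadj).edgeSet.ncard := by
        rw [Subgraph.edgeSet_sup]; exact Set.ncard_union_le _ _
    _ = steinerDist G (insert u S) + 1 := by simp [hcard]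

theorem Connected.steinerDist_insert_add_one_eq [Finite V] (hG : G.Connected) {u u' : V}
    (hadj : G.Adj u u') (hbr : G.IsBridge s(u, u')) {S : Set V} (hSne : S.Nonempty)
    (hS : ∀ x ∈ S, (G.deleteEdges {s(u, u')}).Reachable u x) :
    steinerDist G (insert u S) + 1 = steinerDist G (insert u' S) := by
  refine le_antisymm ?_ (hG.steinerDist_insert_le_add_one hadj S)
  obtain ⟨H, hH, hSH, hcard⟩ := hG.exists_steinerDist_eq (insert u' S)
  obtain ⟨H₂, hH₂, hSH₂, hcard₂⟩ :=
    Subgraph.exists_connected_ncard_edgeSet_add_one_le hbr hH (hSH (Set.mem_insert u' S))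
      ((Set.subset_insert u' S).trans hSH) hSne hS
  calc steinerDist G (insert u S) + 1 ≤ H₂.edgeSet.ncard + 1 :=
        Nat.add_le_add_right (steinerDist_le hH₂ hSH₂) 1
    _ ≤ steinerDist G (insert u' S) := hcard ▸ hcard₂

end SimpleGraph

/-- Let `e = {u, u'}` be an edge of a tree `T`, `A` the component of `T - e` containing `u`.
If `w ∈ A` and all members of a finite multiset `I` of vertices lie in `A`, then
`d_T({u,w} ∪ I) + 1 = d_T({u',w} ∪ I)`. -/
theorem stmt2 {V : Type*} [Fintype V] (T : SimpleGraph V) (hT : T.IsTree)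
    (u u' : V) (hadj : T.Adj u u')
    (w : V) (hw : (T.deleteEdges {s(u, u')}).Reachable u w)
    (I : Multiset V) (hI : ∀ i ∈ I, (T.deleteEdges {s(u, u')}).Reachable u i) :
    steinerDist T ({u, w} ∪ {a | a ∈ I}) + 1 = steinerDist T ({u', w} ∪ {a | a ∈ I}) := by
  have hbr : T.IsBridge s(u, u') := isAcyclic_iff_forall_adj_isBridge.mp hT.isAcyclic hadj
  have hS : ∀ x ∈ insert w {a | a ∈ I}, (T.deleteEdges {s(u, u')}).Reachable u x := by
    rintro x (rfl | hx)
    exacts [hw, hI x hx]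
  simpa only [Set.insert_union, Set.singleton_union] using
    hT.connected.steinerDist_insert_add_one_eq hadj hbr ⟨w, Set.mem_insert w _⟩ hS
end

section
/- Let T be a tree, e = {u, u'} an edge of T with components A ∋ u and B ∋ u' of T - e. If a set I of vertices meets both A and B, then for every vertex w, d_T({u, w} ∪ I) = d_T({u', w} ∪ I). -/
/-! Every edge `e = uu'` of a tree is a bridge, so a connected subgraph meeting both sides of
`T - e` must use `e` and hence contain both `u` and `u'`. With `I` meeting both sides, the two
vertex sets `{u, w} ∪ I` and `{u', w} ∪ I` are therefore contained in exactly the same connected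
subgraphs. -/

open SimpleGraph

theorem SimpleGraph.Subgraph.Connected.mem_edgeSet_of_isBridge {V : Type*} {G : SimpleGraph V}
    {H : G.Subgraph} (hH : H.Connected) {u v i j : V} (hb : G.IsBridge s(u, v))
    (hi : i ∈ H.verts) (hj : j ∈ H.verts)
    (hui : (G.deleteEdges {s(u, v)}).Reachable u i)
    (hvj : (G.deleteEdges {s(u, v)}).Reachable v j) :
    s(u, v) ∈ H.edgeSet := by
  obtain ⟨p, hpH⟩ := (Subgraph.preconnected_iff_forall_exists_walk_subgraph H).mp
    hH.preconnected hi hj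
  have hp : s(u, v) ∈ p.edges := by
    by_contra hp
    have hij := reachable_deleteEdges_iff_exists_walk.mpr ⟨p, hp⟩
    exact isBridge_iff.mp hb ((hui.trans hij).trans hvj.symm)
  exact Subgraph.edgeSet_mono hpH (p.mem_edges_toSubgraph.mpr hp)

theorem steinerDist_congr {V : Type*} {G : SimpleGraph V} {S S' : Set V}
    (h : ∀ H : G.Subgraph, H.Connected → (S ⊆ H.verts ↔ S' ⊆ H.verts)) :
    steinerDist G S = steinerDist G S' := by
  unfold steinerDist
  congr 1
  ext m
  exact exists_congr fun H ↦ and_congr_right fun hH ↦ and_congr_left' (h H hH)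

theorem stmt4_general {V : Type*} (T : SimpleGraph V) (hT : T.IsTree)
    (u u' : V) (hadj : T.Adj u u') (I : Set V)
    (hIA : ∃ i ∈ I, (T.deleteEdges {s(u, u')}).Reachable u i)
    (hIB : ∃ i ∈ I, (T.deleteEdges {s(u, u')}).Reachable u' i) :
    ∀ w : V, steinerDist T ({u, w} ∪ I) = steinerDist T ({u', w} ∪ I) := by
  intro w
  obtain ⟨i, hiI, hui⟩ := hIA
  obtain ⟨j, hjI, hu'j⟩ := hIB
  have hb : T.IsBridge s(u, u') := isAcyclic_iff_forall_adj_isBridge.mp hT.isAcyclic hadj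
  refine steinerDist_congr fun H hH ↦ ?_
  by_cases hI : I ⊆ H.verts
  · have he := hH.mem_edgeSet_of_isBridge hb (hI hiI) (hI hjI) hui hu'j
    have hu : u ∈ H.verts := H.mem_verts_of_mem_edge he (Sym2.mem_mk_left u u')
    have hu' : u' ∈ H.verts := H.mem_verts_of_mem_edge he (Sym2.mem_mk_right u u')
    simp [Set.union_subset_iff, Set.insert_subset_iff, hu, hu', hI]
  · simp [Set.union_subset_iff, hI]

/-- Let `e = {u, u'}` be an edge of a tree `T`, with components `A ∋ u` and `B ∋ u'`
of `T - e`.  If a set `I` of vertices meets both `A` and `B`, then for every vertex `w`,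
`d_T({u,w} ∪ I) = d_T({u',w} ∪ I)`. -/
theorem stmt4 {V : Type*} [Fintype V] (T : SimpleGraph V) (hT : T.IsTree)
    (u u' : V) (hadj : T.Adj u u') (I : Set V)
    (hIA : ∃ i ∈ I, (T.deleteEdges {s(u, u')}).Reachable u i)
    (hIB : ∃ i ∈ I, (T.deleteEdges {s(u, u')}).Reachable u' i) :
    ∀ w : V, steinerDist T ({u, w} ∪ I) = steinerDist T ({u', w} ∪ I) :=
  stmt4_general T hT u u' hadj I hIA hIB
end

section
/- Let T be a tree, e = {u, u'} an edge of T, A and B the components of T - e containing u and u' respectively. If w and w' are two vertices lying in the same component of T - e, then for every finite set I of vertices, d_T({u, w} ∪ I) - d_T({u', w} ∪ I) = d_T({u, w'} ∪ I) - d_T({u', w'} ∪ I). -/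
/-!
In a finite tree the Steiner distance of a nonempty finite set `S` is the number of edges `f`
whose deletion separates two vertices of `S`: every connected subgraph containing `S` uses
all of them, and the union of the paths from one vertex of `S` to the others uses only them.
Replacing `u` by its neighbour `u'` in `S` changes the status of no edge other than
`e = s(u, u')`, and `e` separates `insert u X` exactly when `X` leaves the component of `u`
in `T - e`. Since `w` and `w'` lie in the same component of `T - e`, both sides of the
identity are the same difference of two such indicators.
-/

open SimpleGraph

namespace SimpleGraph

variable {V : Type*} {T : SimpleGraph V}

def separatingEdges (T : SimpleGraph V) (S : Set V) : Set (Sym2 V) :=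
  {f | f ∈ T.edgeSet ∧ ∃ a ∈ S, ∃ b ∈ S, ¬ (T.deleteEdges {f}).Reachable a b}

lemma separatingEdges_mono {S S' : Set V} (h : S ⊆ S') :
    separatingEdges T S ⊆ separatingEdges T S' := by
  rintro f ⟨hf, a, ha, b, hb, hr⟩
  exact ⟨hf, a, h ha, b, h hb, hr⟩

lemma separatingEdges_subset_edgeSet {H : T.Subgraph} (hH : H.Connected) {S : Set V}
    (hS : S ⊆ H.verts) : separatingEdges T S ⊆ H.edgeSet := by
  rintro f ⟨-, a, ha, b, hb, hr⟩
  by_contra hfH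
  refine hr ((hH ⟨a, hS ha⟩ ⟨b, hS hb⟩).map ⟨Subtype.val, fun {x y} hxy => ?_⟩)
  rw [deleteEdges_adj, Set.mem_singleton_iff]
  exact ⟨hxy.adj_sub, fun hfx => hfH (hfx ▸ Subgraph.mem_edgeSet.mpr hxy)⟩

lemma IsTree.not_reachable_deleteEdges_of_mem_edges (hT : T.IsTree) {a b : V}
    {p : T.Walk a b} (hp : p.IsPath) {f : Sym2 V} (hf : f ∈ p.edges) :
    ¬ (T.deleteEdges {f}).Reachable a b := by
  classical
  rintro ⟨q⟩
  let q' := q.toPath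
  have hsub : ∀ g ∈ q'.1.edges, g ∈ T.edgeSet := fun g hg =>
    (edgeSet_deleteEdges _ ▸ q'.1.edges_subset_edgeSet hg).1
  -- the path `q'` avoids `f`, yet by uniqueness of paths in a tree it is `p`
  have hpq := (hT.existsUnique_path a b).unique hp (q'.2.transfer hsub)
  rw [hpq, Walk.edges_transfer] at hf
  have := q'.1.edges_subset_edgeSet hf
  rw [edgeSet_deleteEdges] at this
  exact this.2 rfl

lemma IsTree.exists_connected_subgraph_edgeSet_subset_separatingEdges (hT : T.IsTree) (s₀ : V)
    {S : Set V} (hS : S.Finite) :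
    ∃ H : T.Subgraph, H.Connected ∧ insert s₀ S ⊆ H.verts ∧
      H.edgeSet ⊆ separatingEdges T (insert s₀ S) := by
  induction S, hS using Set.Finite.induction_on with
  | empty =>
    refine ⟨T.singletonSubgraph s₀, Subgraph.singletonSubgraph_connected, ?_, ?_⟩ <;>
      simp
  | @insert a S _ _ ih =>
    obtain ⟨H, hconn, hverts, hedges⟩ := ih
    obtain ⟨p, hp, -⟩ := hT.existsUnique_path s₀ a
    refine ⟨H ⊔ p.toSubgraph, ?_, ?_, ?_⟩
    · exact Subgraph.connected_sup hconn.preconnected p.toSubgraph_connected.preconnected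
        ⟨s₀, hverts (Set.mem_insert _ _), p.start_mem_verts_toSubgraph⟩
    · rw [Set.insert_comm, Set.insert_subset_iff]
      exact ⟨Or.inr p.end_mem_verts_toSubgraph, hverts.trans Set.subset_union_left⟩
    · rw [Subgraph.edgeSet_sup, Set.union_subset_iff]
      refine ⟨hedges.trans
        (separatingEdges_mono (Set.insert_subset_insert (Set.subset_insert _ _))),
        fun f hf => ?_⟩
      rw [Walk.mem_edges_toSubgraph] at hf
      exact ⟨p.edges_subset_edgeSet hf, s₀, Set.mem_insert _ _, a,
        Set.mem_insert_of_mem _ (Set.mem_insert _ _),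
        hT.not_reachable_deleteEdges_of_mem_edges hp hf⟩

lemma IsTree.steinerDist_insert_eq_ncard_separatingEdges [Finite V] (hT : T.IsTree) (s₀ : V)
    {S : Set V} (hS : S.Finite) :
    steinerDist T (insert s₀ S) = (separatingEdges T (insert s₀ S)).ncard := by
  obtain ⟨H, hconn, hverts, hedges⟩ :=
    hT.exists_connected_subgraph_edgeSet_subset_separatingEdges s₀ hS
  have hH : H.edgeSet = separatingEdges T (insert s₀ S) :=
    hedges.antisymm (separatingEdges_subset_edgeSet hconn hverts)
  refine le_antisymm (Nat.sInf_le ⟨H, hconn, hverts, by rw [hH]⟩)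
    (le_csInf ⟨_, H, hconn, hverts, rfl⟩ ?_)
  rintro m ⟨H', hconn', hverts', rfl⟩
  exact Set.ncard_le_ncard (separatingEdges_subset_edgeSet hconn' hverts') (Set.toFinite _)

lemma mem_separatingEdges_insert_iff {f : Sym2 V} (hf : f ∈ T.edgeSet) (u : V) (S : Set V) :
    f ∈ separatingEdges T (insert u S) ↔
      ¬ S ⊆ ((T.deleteEdges {f}).connectedComponentMk u).supp := by
  simp only [Set.not_subset, ConnectedComponent.mem_supp_iff, ConnectedComponent.eq]
  constructor
  · rintro ⟨-, a, ha, b, hb, hab⟩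
    by_contra! hS
    have hreach : ∀ x ∈ insert u S, (T.deleteEdges {f}).Reachable u x := by
      rintro x (rfl | hx)
      exacts [.rfl, (hS x hx).symm]
    exact hab ((hreach a ha).symm.trans (hreach b hb))
  · rintro ⟨x, hx, hxu⟩
    exact ⟨hf, u, Set.mem_insert _ _, x, Set.mem_insert_of_mem _ hx, fun h => hxu h.symm⟩

lemma separatingEdges_insert_sdiff_subset {u u' : V} (hadj : T.Adj u u') (S : Set V) :
    separatingEdges T (insert u S) \ {s(u, u')} ⊆ separatingEdges T (insert u' S) := by
  rintro f ⟨⟨hf, a, ha, b, hb, hab⟩, hfe⟩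
  have huu' : (T.deleteEdges {f}).Reachable u u' := by
    refine Adj.reachable (deleteEdges_adj.mpr ⟨hadj, ?_⟩)
    exact fun h => hfe (Set.mem_singleton_iff.mp h).symm
  -- `u` and `u'` are interchangeable as witnesses, since `T - f` still joins them
  have hreplace :
      ∀ x ∈ insert u S, ∃ y ∈ insert u' S, (T.deleteEdges {f}).Reachable x y := by
    rintro x (rfl | hx)
    exacts [⟨u', Set.mem_insert _ _, huu'⟩, ⟨x, Set.mem_insert_of_mem _ hx, .rfl⟩]
  obtain ⟨a', ha', haa'⟩ := hreplace a ha
  obtain ⟨b', hb', hbb'⟩ := hreplace b hb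
  exact ⟨hf, a', ha', b', hb', fun h => hab (haa'.trans (h.trans hbb'.symm))⟩

lemma separatingEdges_insert_sdiff_eq {u u' : V} (hadj : T.Adj u u') (S : Set V) :
    separatingEdges T (insert u S) \ {s(u, u')} =
      separatingEdges T (insert u' S) \ {s(u, u')} := by
  refine (Set.subset_sdiff_singleton (separatingEdges_insert_sdiff_subset hadj S)
    (fun h => h.2 rfl)).antisymm (Set.subset_sdiff_singleton ?_ (fun h => h.2 rfl))
  rw [Sym2.eq_swap]
  exact separatingEdges_insert_sdiff_subset hadj.symm S

open Classical in
lemma IsTree.steinerDist_insert_sub_steinerDist_insert [Finite V] (hT : T.IsTree) {u u' : V}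
    (hadj : T.Adj u u') {X : Set V} (hX : X.Finite) :
    (steinerDist T (insert u X) : ℤ) - steinerDist T (insert u' X) =
      (if X ⊆ ((T.deleteEdges {s(u, u')}).connectedComponentMk u').supp then 1 else 0) -
      (if X ⊆ ((T.deleteEdges {s(u, u')}).connectedComponentMk u).supp then 1 else 0) := by
  have hcard : ∀ s : Set (Sym2 V), (s.ncard : ℤ) =
      (s \ {s(u, u')}).ncard + if s(u, u') ∈ s then 1 else 0 := by
    intro s
    split_ifs with h
    · rw [← Set.ncard_sdiff_singleton_add_one h (Set.toFinite s)]
      push_cast; rfl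
    · rw [Set.sdiff_singleton_eq_self h, add_zero]
  rw [hT.steinerDist_insert_eq_ncard_separatingEdges u hX,
    hT.steinerDist_insert_eq_ncard_separatingEdges u' hX,
    hcard, hcard (separatingEdges T _), separatingEdges_insert_sdiff_eq hadj,
    mem_separatingEdges_insert_iff hadj, mem_separatingEdges_insert_iff hadj]
  split_ifs <;> ring

end SimpleGraph

/-- Let `e = {u, u'}` be an edge of a tree `T`.  If `w, w'` lie in the same component
of `T - e`, then for every finite set `I` of vertices,
`d_T({u,w} ∪ I) - d_T({u',w} ∪ I) = d_T({u,w'} ∪ I) - d_T({u',w'} ∪ I)`. -/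
theorem stmt5 {V : Type*} [Fintype V] (T : SimpleGraph V) (hT : T.IsTree)
    (u u' : V) (hadj : T.Adj u u')
    (w w' : V) (hww' : (T.deleteEdges {s(u, u')}).Reachable w w')
    (I : Set V) (hIfin : I.Finite) :
    (steinerDist T ({u, w} ∪ I) : ℤ) - (steinerDist T ({u', w} ∪ I) : ℤ)
      = (steinerDist T ({u, w'} ∪ I) : ℤ) - (steinerDist T ({u', w'} ∪ I) : ℤ) := by
  simp only [Set.insert_union, Set.singleton_union]
  rw [hT.steinerDist_insert_sub_steinerDist_insert hadj (hIfin.insert w),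
    hT.steinerDist_insert_sub_steinerDist_insert hadj (hIfin.insert w')]
  have hcomp : ∀ v, insert w I ⊆ ((T.deleteEdges {s(u, u')}).connectedComponentMk v).supp ↔
      insert w' I ⊆ ((T.deleteEdges {s(u, u')}).connectedComponentMk v).supp := by
    simp only [Set.insert_subset_iff, ConnectedComponent.mem_supp_iff,
      ConnectedComponent.eq.mpr hww', implies_true]
  rw [hcomp u, hcomp u']
end

section
/- For the tree T on 2 vertices {0,1} with one edge, and k ≥ 2 even, if x ∈ ℂ^2 satisfies both partial derivatives of the Steiner k-form p_T vanishing at x, then x = 0. (Concretely, p_T(x_0,x_1) = Σ over k-tuples in {0,1}^k of d_T of the underlying set times the monomial, where d_T(S) = 1 if S = {0,1} and 0 otherwise; so p_T(x_0,x_1) = (x_0+x_1)^k - x_0^k - x_1^k.) -/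
/-!
A `k`-tuple of vertices of the one-edge tree has Steiner distance `1` unless it is constant, so
`p_T = (x₀ + x₁)ᵏ - x₀ᵏ - x₁ᵏ`. At a nullvector `(x₀ + x₁)ᵐ = x₀ᵐ = x₁ᵐ` with `m = k - 1` odd.
If `x₀ ≠ 0`, then `t = x₁ / x₀` and `1 + t` are both `m`-th roots of unity; `‖t‖ = ‖1 + t‖ = 1`
forces `t² + t + 1 = 0`, and then `(1 + t)ᵐ = (-t²)ᵐ = -1`, a contradiction.
-/

open SimpleGraph MvPolynomial

/-- The Steiner `k`-form of `G`: `p_G(x) = Σ_{(v_1,…,v_k)} d_G({v_1,…,v_k}) x_{v_1}⋯x_{v_k}`,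
summed over all `k`-tuples of vertices. -/
noncomputable def steinerForm {V : Type*} [Fintype V] (G : SimpleGraph V) (k : ℕ) :
    MvPolynomial V ℂ :=
  ∑ f : Fin k → V, (steinerDist G (Set.range f) : MvPolynomial V ℂ) * ∏ j, X (f j)

/-- A Steiner nullvector: a common zero of all partial derivatives of the Steiner `k`-form. -/
def IsSteinerNullvector {V : Type*} [Fintype V] (G : SimpleGraph V) (k : ℕ) (x : V → ℂ) : Prop :=
  ∀ j : V, MvPolynomial.eval x (MvPolynomial.pderiv j (steinerForm G k)) = 0

open Finset

lemma SimpleGraph.Subgraph.Connected.subsingleton_verts_of_edgeSet_eq_empty {V : Type*}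
    {G : SimpleGraph V} {H : G.Subgraph}
    (hH : H.Connected) (he : H.edgeSet = ∅) : H.verts.Subsingleton := by
  intro u hu v hv
  obtain ⟨w⟩ := hH ⟨u, hu⟩ ⟨v, hv⟩
  cases w with
  | nil => rfl
  | cons h _ =>
    have : s(u, _) ∈ H.edgeSet := h
    simp [he] at this

section SteinerDist

variable {V : Type*} (G : SimpleGraph V)

lemma steinerDist_eq_zero_of_subsingleton [Nonempty V] {S : Set V} (hS : S.Subsingleton) :
    steinerDist G S = 0 := by
  obtain ⟨v, hv⟩ : ∃ v, S ⊆ {v} := by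
    rcases hS.eq_empty_or_singleton with rfl | ⟨v, rfl⟩
    · exact ⟨Classical.arbitrary V, Set.empty_subset _⟩
    · exact ⟨v, subset_rfl⟩
  refine Nat.sInf_eq_zero.2 (Or.inl ⟨G.singletonSubgraph v, Subgraph.singletonSubgraph_connected,
    by simpa using hv, by simp [edgeSet_singletonSubgraph]⟩)

lemma steinerDist_of_adj [Finite V] {u v : V} (huv : G.Adj u v) : steinerDist G {u, v} = 1 := by
  set M := {m | ∃ H : G.Subgraph, H.Connected ∧ {u, v} ⊆ H.verts ∧ H.edgeSet.ncard = m}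
  have one_mem : 1 ∈ M := ⟨G.subgraphOfAdj huv, Subgraph.subgraphOfAdj_connected huv,
    by simp, by simp [edgeSet_subgraphOfAdj]⟩
  have zero_not_mem : 0 ∉ M := by
    rintro ⟨H, hH, huvH, he⟩
    have hsub :=
      hH.subsingleton_verts_of_edgeSet_eq_empty ((Set.ncard_eq_zero (Set.toFinite _)).1 he)
    exact huv.ne (hsub (huvH (by simp)) (huvH (by simp)))
  have hmem := Nat.sInf_mem ⟨1, one_mem⟩
  exact le_antisymm (Nat.sInf_le one_mem)
    (Nat.one_le_iff_ne_zero.2 fun h0 => zero_not_mem (h0 ▸ hmem))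

end SteinerDist

lemma steinerDist_top_fin_two_of_not_subsingleton {S : Set (Fin 2)} (hS : ¬S.Subsingleton) :
    steinerDist ⊤ S = 1 := by
  have : S = {0, 1} := by
    obtain ⟨a, ha, b, hb, hab⟩ := Set.not_subsingleton_iff.1 hS
    ext v
    fin_cases v <;> fin_cases a <;> fin_cases b <;> simp_all
  rw [this]
  exact steinerDist_of_adj _ (by simp)

lemma Function.eq_const_of_subsingleton_range {α β : Type*} {f : α → β}
    (hf : (Set.range f).Subsingleton) (a : α) : f = Function.const α (f a) :=
  funext fun _ => hf ⟨_, rfl⟩ ⟨a, rfl⟩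

lemma sum_map_const_prod {V R : Type*} [Fintype V] [CommSemiring R] (k : ℕ) [NeZero k]
    (x : V → R) :
    ∑ f ∈ univ.map ⟨Function.const (Fin k), Function.const_injective⟩, ∏ j, x (f j) =
      ∑ v, x v ^ k := by
  simp [Finset.sum_map]

lemma steinerForm_top_fin_two (k : ℕ) [NeZero k] :
    steinerForm (⊤ : SimpleGraph (Fin 2)) k = (X 0 + X 1) ^ k - X 0 ^ k - X 1 ^ k := by
  set C : Finset (Fin k → Fin 2) := univ.map ⟨Function.const (Fin k), Function.const_injective⟩
  have term : ∀ f : Fin k → Fin 2, (steinerDist ⊤ (Set.range f) : MvPolynomial (Fin 2) ℂ) *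
      ∏ j, X (f j) = ∏ j, X (f j) - if f ∈ C then ∏ j, X (f j) else 0 := by
    intro f
    by_cases hf : f ∈ C
    · have hsub : (Set.range f).Subsingleton := by
        obtain ⟨v, -, rfl⟩ := mem_map.1 hf
        exact Set.subsingleton_of_subset_singleton Set.range_const_subset
      rw [if_pos hf, steinerDist_eq_zero_of_subsingleton _ hsub, Nat.cast_zero, zero_mul, sub_self]
    · have : ¬(Set.range f).Subsingleton := fun h =>
        hf (mem_map.2 ⟨f 0, mem_univ _, (Function.eq_const_of_subsingleton_range h 0).symm⟩)
      simp [hf, steinerDist_top_fin_two_of_not_subsingleton this]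
  calc steinerForm (⊤ : SimpleGraph (Fin 2)) k
      = ∑ f : Fin k → Fin 2, ∏ j, X (f j) - ∑ f ∈ C, ∏ j, X (f j) := by
        simp_rw [steinerForm, term, sum_sub_distrib, sum_ite_mem, univ_inter]
    _ = (∑ v, X v) ^ k - ∑ v, X v ^ k := by rw [Fintype.sum_pow, sum_map_const_prod]
    _ = (X 0 + X 1) ^ k - X 0 ^ k - X 1 ^ k := by simp only [Fin.sum_univ_two]; ring

lemma Complex.one_add_pow_ne_one_of_pow_eq_one {m : ℕ} (hm : Odd m) {t : ℂ} (ht : t ^ m = 1) :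
    (1 + t) ^ m ≠ 1 := by
  intro hs
  have hm0 : m ≠ 0 := by rintro rfl; simp at hm
  have mul_conj_eq_one : ∀ z : ℂ, z ^ m = 1 → z * (starRingEnd ℂ) z = 1 := fun z hz => by
    rw [Complex.mul_conj', Complex.norm_eq_one_of_pow_eq_one hz hm0]; norm_num
  have ht1 := mul_conj_eq_one t ht
  have hs1 := mul_conj_eq_one (1 + t) hs
  rw [map_add, map_one] at hs1
  have hcube : 1 + t = -t ^ 2 := by linear_combination t * hs1 - (1 + t) * ht1
  have : (1 + t) ^ m = -1 := by
    rw [hcube, hm.neg_pow, ← pow_mul, mul_comm, pow_mul, ht, one_pow]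
  norm_num [hs] at this

lemma Complex.eq_zero_of_add_pow_eq_pow_of_add_pow_eq_pow {m : ℕ} (hm : Odd m) {a b : ℂ}
    (ha : (a + b) ^ m = a ^ m) (hb : (a + b) ^ m = b ^ m) : a = 0 ∧ b = 0 := by
  have hm0 : m ≠ 0 := by rintro rfl; simp at hm
  by_cases h0 : a = 0
  · subst h0
    exact ⟨rfl, pow_eq_zero_iff hm0 |>.1 (by rw [← hb, ha, zero_pow hm0])⟩
  have hpow : a ^ m ≠ 0 := pow_ne_zero _ h0
  refine absurd ?_ (Complex.one_add_pow_ne_one_of_pow_eq_one hm (t := b / a) ?_)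
  · rw [one_add_div h0, div_pow, ha, div_self hpow]
  · rw [div_pow, ← hb, ha, div_self hpow]

lemma eval_pderiv_add_pow_sub_pow_sub_pow {R : Type*} [CommRing R] (k : ℕ) (x : Fin 2 → R)
    (i : Fin 2) :
    eval x (pderiv i ((X 0 + X 1) ^ k - X 0 ^ k - X 1 ^ k : MvPolynomial (Fin 2) R)) =
      k * ((x 0 + x 1) ^ (k - 1) - x i ^ (k - 1)) := by
  fin_cases i <;> simp [pderiv_X] <;> ring

/-- For the tree on 2 vertices (one edge) and `k ≥ 2` even, the Steiner `k`-form is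
`(x_0 + x_1)^k - x_0^k - x_1^k`, and the only Steiner nullvector is `0`. -/
theorem stmt12 (k : ℕ) (hk : Even k) (hk2 : 2 ≤ k) :
    steinerForm (⊤ : SimpleGraph (Fin 2)) k
      = (X 0 + X 1) ^ k - X 0 ^ k - X 1 ^ k ∧
    ∀ x : Fin 2 → ℂ, IsSteinerNullvector (⊤ : SimpleGraph (Fin 2)) k x → x = 0 := by
  have : NeZero k := ⟨by omega⟩
  have hform := steinerForm_top_fin_two k
  refine ⟨hform, fun x hx => ?_⟩
  have hk0 : (k : ℂ) ≠ 0 := Nat.cast_ne_zero.2 (NeZero.ne k)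
  have hpow_eq : ∀ i, (x 0 + x 1) ^ (k - 1) = x i ^ (k - 1) := fun i => by
    have := hx i
    rwa [hform, eval_pderiv_add_pow_sub_pow_sub_pow, mul_eq_zero, or_iff_right hk0,
      sub_eq_zero] at this
  obtain ⟨h0, h1⟩ := Complex.eq_zero_of_add_pow_eq_pow_of_add_pow_eq_pow
    (Nat.Even.sub_odd (by omega) hk odd_one) (hpow_eq 0) (hpow_eq 1)
  ext i
  fin_cases i <;> assumption
end

section
/- Let k ≥ 2 be even and p(x_0, x_1) = (x_0 + x_1)^k - x_0^k - x_1^k ∈ ℂ[x_0, x_1]. Then the only common zero of ∂p/∂x_0 and ∂p/∂x_1 in ℂ^2 is (0,0). -/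
/-!
Write `a = x 0`, `b = x 1` and `n = k - 1`, which is odd. The two partial derivatives are
`k ((a + b)^n - a^n)` and `k ((a + b)^n - b^n)`, so a common zero has `(a + b)^n = a^n = b^n`.
If `a ≠ 0`, then `z = b / a` satisfies `z^n = 1` and `(1 + z)^n = 1`, so `|z| = |1 + z| = 1`.
This forces `z` to be a primitive cube root of unity, whence `1 + z = -z^2` and
`(1 + z)^n = -z^(2n) = -1`, a contradiction. Hence `a = 0`, and then `b^n = a^n = 0`.
-/

open MvPolynomial ComplexConjugate

namespace Complex

theorem sq_add_self_add_one_eq_zero_of_norm_eq_one {z : ℂ} (hz : ‖z‖ = 1)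
    (hz' : ‖1 + z‖ = 1) : z ^ 2 + z + 1 = 0 := by
  have hzz : z * conj z = 1 := by
    rw [mul_conj, normSq_eq_norm_sq, hz]; norm_num
  have hzz' : (1 + z) * conj (1 + z) = 1 := by
    rw [mul_conj, normSq_eq_norm_sq, hz']; norm_num
  have hsum : z + conj z = -1 := by
    rw [map_add, map_one] at hzz'
    linear_combination hzz' - hzz
  linear_combination z * hsum - hzz

theorem one_add_pow_ne_one_of_pow_eq_one_s13 {n : ℕ} (hn : Odd n) {z : ℂ} (hz : z ^ n = 1) :
    (1 + z) ^ n ≠ 1 := by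
  intro hz'
  have hn0 : n ≠ 0 := hn.pos.ne'
  have hcube : z ^ 2 + z + 1 = 0 :=
    sq_add_self_add_one_eq_zero_of_norm_eq_one (norm_eq_one_of_pow_eq_one hz hn0)
      (norm_eq_one_of_pow_eq_one hz' hn0)
  have : (1 + z) ^ n = -1 := by
    rw [show 1 + z = -z ^ 2 by linear_combination hcube, hn.neg_pow, ← pow_mul, mul_comm,
      pow_mul, hz, one_pow]
  rw [hz'] at this
  norm_num at this

theorem eq_zero_of_add_pow_eq_pow_of_add_pow_eq_pow_s13 {n : ℕ} (hn : Odd n) {a b : ℂ}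
    (ha : (a + b) ^ n = a ^ n) (hb : (a + b) ^ n = b ^ n) : a = 0 := by
  by_contra ha0
  have han : a ^ n ≠ 0 := pow_ne_zero n ha0
  refine one_add_pow_ne_one_of_pow_eq_one_s13 hn (z := b / a) ?_ ?_
  · rw [div_pow, ← hb, ha, div_self han]
  · rw [show 1 + b / a = (a + b) / a by field_simp, div_pow, ha, div_self han]

end Complex

theorem MvPolynomial.pderiv_add_pow_sub_pow_sub_pow {R : Type*} [CommRing R] (k : ℕ)
    (i : Fin 2) :
    pderiv i ((X 0 + X 1) ^ k - X 0 ^ k - X 1 ^ k : MvPolynomial (Fin 2) R) =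
      k * ((X 0 + X 1) ^ (k - 1) - X i ^ (k - 1) : MvPolynomial (Fin 2) R) := by
  fin_cases i <;> simp <;> ring

/-- For even `k ≥ 2` and `p = (x_0 + x_1)^k - x_0^k - x_1^k` over `ℂ`, the only common
zero of `∂p/∂x_0` and `∂p/∂x_1` in `ℂ²` is `(0, 0)`. -/
theorem stmt13 (k : ℕ) (hk : Even k) (hk2 : 2 ≤ k)
    (p : MvPolynomial (Fin 2) ℂ) (hp : p = (X 0 + X 1) ^ k - X 0 ^ k - X 1 ^ k)
    (x : Fin 2 → ℂ)
    (h0 : MvPolynomial.eval x (MvPolynomial.pderiv 0 p) = 0)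
    (h1 : MvPolynomial.eval x (MvPolynomial.pderiv 1 p) = 0) :
    x = 0 := by
  have hodd : Odd (k - 1) := Nat.Even.sub_odd (by omega) hk odd_one
  have hk0 : (k : ℂ) ≠ 0 := Nat.cast_ne_zero.mpr (by omega)
  have hpow (i : Fin 2) (hi : eval x (pderiv i p) = 0) :
      (x 0 + x 1) ^ (k - 1) = x i ^ (k - 1) := by
    simpa [hp, pderiv_add_pow_sub_pow_sub_pow, hk0, sub_eq_zero] using hi
  have ha : x 0 = 0 :=
    Complex.eq_zero_of_add_pow_eq_pow_of_add_pow_eq_pow_s13 hodd (hpow 0 h0) (hpow 1 h1)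
  have hb : x 1 = 0 :=
    Complex.eq_zero_of_add_pow_eq_pow_of_add_pow_eq_pow_s13 hodd
      (by rw [add_comm]; exact hpow 1 h1) (by rw [add_comm]; exact hpow 0 h0)
  ext i
  fin_cases i
  exacts [ha, hb]
end

section
/- Let k ≥ 3 be odd and p(x_0, x_1, x_2) the Steiner k-form of the path on 3 vertices 0-1-2 (summing over all k-tuples of vertices the Steiner distance of the underlying set times the monomial). Then there exists a nonzero x ∈ ℂ^3 with ∇p(x) = 0. -/
open SimpleGraph MvPolynomial

/-!
Every edge of a tree contributes one to the Steiner distance of a nonempty vertex set `S`,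
unless `S` lies inside one of the two components left by deleting that edge. For the path
`0 - 1 - 2` this gives
`p = 2 (x₀ + x₁ + x₂)^k - x₀^k - (x₁ + x₂)^k - (x₀ + x₁)^k - x₂^k`.
On the plane `x₀ + x₁ + x₂ = 0`, and since `k - 1` is even, all three partial derivatives
of `p` equal `-k (x₀^(k-1) + x₂^(k-1))`; hence `(1, -1 - ζ, ζ)` with `ζ^(k-1) = -1` is a
nonzero common zero.
-/

open Finset

namespace SimpleGraph

variable {V : Type*} {G : SimpleGraph V} {S : Set V}

lemma steinerDist_le_ncard {H : G.Subgraph} (hH : H.Connected) (hS : S ⊆ H.verts) :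
    steinerDist G S ≤ H.edgeSet.ncard :=
  Nat.sInf_le ⟨H, hH, hS, rfl⟩

lemma le_steinerDist {n : ℕ} (hS : ∃ H : G.Subgraph, H.Connected ∧ S ⊆ H.verts)
    (h : ∀ H : G.Subgraph, H.Connected → S ⊆ H.verts → n ≤ H.edgeSet.ncard) :
    n ≤ steinerDist G S := by
  obtain ⟨H, hH, hSH⟩ := hS
  exact le_csInf ⟨_, H, hH, hSH, rfl⟩ fun _ ⟨H, hH, hSH, hm⟩ => hm ▸ h H hH hSH

lemma steinerDist_eq_zero_of_subsingleton [Nonempty V] (hS : S.Subsingleton) :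
    steinerDist G S = 0 := by
  obtain ⟨v, hv⟩ : ∃ v, S ⊆ {v} := by
    rcases hS.eq_empty_or_singleton with rfl | ⟨v, rfl⟩
    · exact ⟨Classical.arbitrary V, Set.empty_subset _⟩
    · exact ⟨v, subset_rfl⟩
  exact Nat.le_zero.mp <| (steinerDist_le_ncard (Subgraph.singletonSubgraph_connected (v := v))
    (by simpa using hv)).trans_eq (by simp)

lemma Subgraph.Connected.exists_adj_of_mem {H : G.Subgraph} (hH : H.Connected) {u v : V}
    (hu : u ∈ H.verts) (hv : v ∈ H.verts) (huv : u ≠ v) : ∃ w, H.Adj u w :=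
  have : Nontrivial H.verts := ⟨⟨u, hu⟩, ⟨v, hv⟩, by simpa using huv⟩
  hH.preconnected.exists_adj_of_nontrivial ⟨u, hu⟩

lemma steinerDist_le_ncard_edgeSet (hG : G.Connected) : steinerDist G S ≤ G.edgeSet.ncard :=
  steinerDist_le_ncard ⟨Subgraph.topIso.connected_iff.mpr hG⟩ (Set.subset_univ S)

lemma steinerDist_pair_of_adj [Finite V] {u v : V} (h : G.Adj u v) :
    steinerDist G {u, v} = 1 := by
  have hc := Subgraph.subgraphOfAdj_connected h
  apply le_antisymm
  · simpa using steinerDist_le_ncard hc (by simp)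
  · refine le_steinerDist ⟨_, hc, by simp⟩ fun H hH hS => ?_
    obtain ⟨w, hw⟩ := hH.exists_adj_of_mem (hS (by simp)) (hS (by simp)) h.ne
    exact (Set.ncard_pos (Set.toFinite _)).mpr ⟨s(u, w), hw⟩

lemma fromEdgeSet_eq_pathGraph_three :
    fromEdgeSet {s((0 : Fin 3), 1), s(1, 2)} = pathGraph 3 := by
  ext u v
  rw [fromEdgeSet_adj, pathGraph_adj]
  fin_cases u <;> fin_cases v <;> simp

lemma pathGraph_three_edgeSet : (pathGraph 3).edgeSet = {s(0, 1), s(1, 2)} := by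
  ext e
  induction e using Sym2.ind with | _ u v => ?_
  rw [mem_edgeSet, pathGraph_adj]
  fin_cases u <;> fin_cases v <;> simp

lemma steinerDist_pathGraph_three_of_mem {S : Set (Fin 3)} (h0 : 0 ∈ S) (h2 : 2 ∈ S) :
    steinerDist (pathGraph 3) S = 2 := by
  have hG := pathGraph_connected 2
  apply le_antisymm
  · simpa [pathGraph_three_edgeSet, Set.ncard_pair]
      using steinerDist_le_ncard_edgeSet (S := S) hG
  · refine le_steinerDist ⟨⊤, ⟨Subgraph.topIso.connected_iff.mpr hG⟩, Set.subset_univ S⟩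
      fun H hH hS => ?_
    obtain ⟨w₀, hw₀⟩ := hH.exists_adj_of_mem (hS h0) (hS h2) (by decide)
    obtain ⟨w₂, hw₂⟩ := hH.exists_adj_of_mem (hS h2) (hS h0) (by decide)
    -- no edge of the path joins `0` to `2`, so these two edges are distinct
    have hne : s((0 : Fin 3), w₀) ≠ s(2, w₂) := by
      have := pathGraph_adj.mp (H.adj_sub hw₀)
      fin_cases w₀ <;> fin_cases w₂ <;> simp_all
    rw [← Set.ncard_pair hne]
    exact Set.ncard_le_ncard (Set.pair_subset hw₀ hw₂) (Set.toFinite _)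

-- The vertex sets of the components of `pathGraph 3` with one edge deleted.
def pathGraphThreeSides : Finset (Finset (Fin 3)) := {{0}, {1, 2}, {0, 1}, {2}}

lemma steinerDist_pathGraph_three_add_card_sides {s : Finset (Fin 3)} (hs : s.Nonempty) :
    steinerDist (pathGraph 3) s + #{A ∈ pathGraphThreeSides | s ⊆ A} = 2 := by
  have hcases : ∀ s : Finset (Fin 3),
      (0 ∈ s ∧ 2 ∈ s) ∨ s = {0, 1} ∨ s = {1, 2} ∨ #s ≤ 1 := by decide
  rcases hcases s with ⟨h0, h2⟩ | rfl | rfl | hs1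
  · rw [steinerDist_pathGraph_three_of_mem h0 h2]
    have hsides : ∀ s : Finset (Fin 3), 0 ∈ s → 2 ∈ s →
        #{A ∈ pathGraphThreeSides | s ⊆ A} = 0 := by decide
    rw [hsides s h0 h2]
  · rw [coe_pair, steinerDist_pair_of_adj (pathGraph_adj.mpr (by decide))]
    decide
  · rw [coe_pair, steinerDist_pair_of_adj (pathGraph_adj.mpr (by decide))]
    decide
  · rw [steinerDist_eq_zero_of_subsingleton fun a ha b hb => card_le_one.mp hs1 a ha b hb]
    revert s
    decide

end SimpleGraph

lemma sum_sum_pow_eq_sum_card_filter {R V : Type*} [CommSemiring R] [Fintype V] [DecidableEq V]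
    (𝒜 : Finset (Finset V)) (x : V → R) (k : ℕ) :
    ∑ A ∈ 𝒜, (∑ v ∈ A, x v) ^ k =
      ∑ f : Fin k → V, #{A ∈ 𝒜 | univ.image f ⊆ A} • ∏ j, x (f j) := by
  calc ∑ A ∈ 𝒜, (∑ v ∈ A, x v) ^ k
      = ∑ A ∈ 𝒜, ∑ f : Fin k → V, if univ.image f ⊆ A then ∏ j, x (f j) else 0 := by
        refine sum_congr rfl fun A _ => ?_
        rw [sum_pow', ← sum_filter]
        congr 1
        ext f
        simp [Fintype.mem_piFinset, image_subset_iff]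
    _ = _ := by
        rw [sum_comm]
        simp_rw [← sum_filter, sum_const]

lemma steinerForm_pathGraph_three_add {k : ℕ} (hk : k ≠ 0) :
    steinerForm (pathGraph 3) k + ∑ A ∈ pathGraphThreeSides, (∑ v ∈ A, X v) ^ k =
      2 • (∑ v, X v) ^ k := by
  have : Nonempty (Fin k) := ⟨⟨0, Nat.pos_of_ne_zero hk⟩⟩
  rw [steinerForm, sum_sum_pow_eq_sum_card_filter, Fintype.sum_pow, smul_sum, ← sum_add_distrib]
  refine sum_congr rfl fun f _ => ?_
  have hrange : Set.range f = ↑(univ.image f) := by simp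
  rw [hrange, ← nsmul_eq_mul, ← add_smul,
    steinerDist_pathGraph_three_add_card_sides (univ_nonempty.image f)]

lemma steinerForm_pathGraph_three {k : ℕ} (hk : k ≠ 0) :
    steinerForm (pathGraph 3) k = 2 • (X 0 + X 1 + X 2) ^ k
      - (X 0 ^ k + (X 1 + X 2) ^ k + (X 0 + X 1) ^ k + X 2 ^ k) := by
  rw [eq_sub_of_add_eq (steinerForm_pathGraph_three_add hk)]
  simp only [pathGraphThreeSides, Fin.sum_univ_three]
  rw [sum_insert (by decide), sum_insert (by decide), sum_insert (by decide), sum_singleton,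
    sum_pair (by decide), sum_pair (by decide)]
  simp only [sum_singleton, add_assoc]

lemma eval_pderiv_steinerForm_pathGraph_three {k : ℕ} (hk : Odd k) (hk3 : 3 ≤ k)
    {x : Fin 3 → ℂ} (hx : x 0 + x 1 + x 2 = 0) (j : Fin 3) :
    eval x (pderiv j (steinerForm (pathGraph 3) k)) = -k * (x 0 ^ (k - 1) + x 2 ^ (k - 1)) := by
  have heven : Even (k - 1) := Nat.Odd.sub_odd hk odd_one
  have h01 : x 0 + x 1 = -x 2 := by linear_combination hx
  have h12 : x 1 + x 2 = -x 0 := by linear_combination hx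
  rw [steinerForm_pathGraph_three (by omega)]
  fin_cases j <;>
    simp [pderiv_X, h01, h12, heven.neg_pow, zero_pow (show k - 1 ≠ 0 by omega),
      zero_pow (show k ≠ 0 by omega)] <;> ring

/-- For odd `k ≥ 3`, the Steiner `k`-form of the path `0 - 1 - 2` on three vertices has a
nonzero common zero of all its partial derivatives. -/
theorem stmt14 (k : ℕ) (hk : Odd k) (hk3 : 3 ≤ k) :
    ∃ x : Fin 3 → ℂ, x ≠ 0 ∧
      IsSteinerNullvector (SimpleGraph.fromEdgeSet {s((0 : Fin 3), 1), s(1, 2)}) k x := by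
  obtain ⟨ζ, hζ⟩ := IsAlgClosed.exists_pow_nat_eq (-1 : ℂ) (show 0 < k - 1 by omega)
  refine ⟨![1, -1 - ζ, ζ], fun h => by simpa using congrFun h 0, fun j => ?_⟩
  rw [fromEdgeSet_eq_pathGraph_three,
    eval_pderiv_steinerForm_pathGraph_three hk hk3 (by simp only [Matrix.cons_val]; ring) j]
  simp [hζ]
end
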